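/- arXiv:math/0206010 — 2 statements merged into one kernel-verified Lean document; each statement's English description precedes it below -/
import Mathlib

section
/- Let 1 ≤ p ≤ 2. If X has type p with constant T, then the ℓ₂-sum ℓ₂(X) = (Σ ⊕ Xᵢ)₂ of countably many copies of X has type p with constant at most C(T, p), depending only on T and p. -/
/-- The Rademacher average `∫₀¹ ‖Σ rₙ(t) xₙ‖ dt` of a finite sequence, computed as the
average over all choices of signs. -/
noncomputable def radAvg {X : Type*} [NormedAddCommGroup X] (N : ℕ) (x : Fin N → X) : ℝ :=
  (∑ ε : Fin N → Bool, ‖∑ n, (if ε n then x n else -x n)‖) / 2 ^ N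

/-- `X` has Rademacher type `p` with constant `T`. -/
def HasTypeWith (p T : ℝ) (X : Type*) [NormedAddCommGroup X] : Prop :=
  ∀ (N : ℕ) (x : Fin N → X), radAvg N x ≤ T * (∑ n, ‖x n‖ ^ p) ^ (1 / p)

/-- `X` has Rademacher cotype `q` with constant `C`. -/
def HasCotypeWith (q C : ℝ) (X : Type*) [NormedAddCommGroup X] : Prop :=
  ∀ (N : ℕ) (x : Fin N → X), (∑ n, ‖x n‖ ^ q) ^ (1 / q) ≤ C * radAvg N x

/-- `X` has Rademacher cotype `∞` with constant `C`:
`sup_n ‖xₙ‖ ≤ C · ∫₀¹ ‖Σ rₙ(t) xₙ‖ dt`. -/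
def HasCotypeInftyWith (C : ℝ) (X : Type*) [NormedAddCommGroup X] : Prop :=
  ∀ (N : ℕ) (x : Fin N → X) (n : Fin N), ‖x n‖ ≤ C * radAvg N x

namespace LpSumTypeAux

open Finset

/-- Flip the `n`-th coordinate of a sign vector. -/
def flipv {N : ℕ} (n : Fin N) (ε : Fin N → Bool) : Fin N → Bool :=
  Function.update ε n (!(ε n))

variable {N : ℕ}

lemma flipv_zero_cons (b : Bool) (g : Fin N → Bool) :
    flipv 0 (Fin.cons b g) = Fin.cons (!b) g := by
  funext m
  refine Fin.cases ?_ (fun i => ?_) m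
  · simp [flipv]
  · rw [flipv, Function.update_of_ne (Fin.succ_ne_zero i)]
    simp

lemma flipv_succ_cons (n : Fin N) (b : Bool) (g : Fin N → Bool) :
    flipv n.succ (Fin.cons b g) = Fin.cons b (flipv n g) := by
  funext m
  refine Fin.cases ?_ (fun i => ?_) m
  · rw [flipv, Function.update_of_ne (Fin.succ_ne_zero n).symm]
    simp
  · by_cases h : i = n
    · subst h
      simp [flipv]
    · rw [flipv, Function.update_of_ne (by simpa [Fin.succ_inj] using h), flipv,
        Fin.cons_succ, Fin.cons_succ, Function.update_of_ne h]

lemma sum_cube_succ (F : (Fin (N+1) → Bool) → ℝ) :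
    ∑ ε, F ε = ∑ g : Fin N → Bool, (F (Fin.cons false g) + F (Fin.cons true g)) := by
  rw [← Equiv.sum_comp (Fin.consEquiv fun _ => Bool) F, Fintype.sum_prod_type_right]
  refine Finset.sum_congr rfl fun g _ => ?_
  rw [Fintype.sum_bool]
  simp only [Fin.consEquiv, Equiv.coe_fn_mk]
  exact add_comm _ _

lemma card_cube (N : ℕ) : (Fintype.card (Fin N → Bool) : ℝ) = 2 ^ N := by simp

/-- Cauchy–Schwarz for the average over the cube. -/
lemma sq_sum_le (f : (Fin N → Bool) → ℝ) :
    (∑ ε, f ε) ^ 2 ≤ 2 ^ N * ∑ ε, f ε ^ 2 := by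
  have h := sq_sum_le_card_mul_sum_sq (s := (univ : Finset (Fin N → Bool))) (f := f)
  rwa [Finset.card_univ, card_cube] at h

/-- Variance bound on the hypercube (Efron–Stein / tensorization). -/
lemma var_le : ∀ (N : ℕ) (f : (Fin N → Bool) → ℝ),
    2 ^ N * ∑ ε, f ε ^ 2 - (∑ ε, f ε) ^ 2 ≤
      2 ^ N * ∑ n, ∑ ε, ((f ε - f (flipv n ε)) / 2) ^ 2
  | 0, f => by
    have : ∀ g : (Fin 0 → Bool) → ℝ, ∑ ε, g ε = g (fun i => i.elim0) := by
      intro g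
      rw [Fintype.sum_eq_single (fun i => i.elim0)]
      · intro x hx
        exact absurd (funext fun i => i.elim0) hx
    rw [this, this]
    simp
  | (N+1), f => by
    have IH₀ := var_le N (fun g => f (Fin.cons false g))
    have IH₁ := var_le N (fun g => f (Fin.cons true g))
    rw [sum_cube_succ (fun ε => f ε ^ 2), sum_cube_succ f, Fin.sum_univ_succ,
      sum_cube_succ (fun ε => ((f ε - f (flipv 0 ε)) / 2) ^ 2)]
    have hsucc : (∑ n : Fin N, ∑ ε : Fin (N+1) → Bool, ((f ε - f (flipv n.succ ε)) / 2) ^ 2)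
        = (∑ n : Fin N, ∑ g : Fin N → Bool,
            ((f (Fin.cons false g) - f (Fin.cons false (flipv n g))) / 2) ^ 2)
          + (∑ n : Fin N, ∑ g : Fin N → Bool,
            ((f (Fin.cons true g) - f (Fin.cons true (flipv n g))) / 2) ^ 2) := by
      rw [← Finset.sum_add_distrib]
      refine Finset.sum_congr rfl fun n _ => ?_
      rw [sum_cube_succ (fun ε => ((f ε - f (flipv n.succ ε)) / 2) ^ 2),
        Finset.sum_add_distrib]
      simp only [flipv_succ_cons]
    rw [hsucc]
    simp only [flipv_zero_cons, Bool.not_false, Bool.not_true]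
    rw [Finset.sum_add_distrib, Finset.sum_add_distrib, Finset.sum_add_distrib]
    have hswap : ∑ g : Fin N → Bool, ((f (Fin.cons true g) - f (Fin.cons false g)) / 2) ^ 2
        = ∑ g : Fin N → Bool, ((f (Fin.cons false g) - f (Fin.cons true g)) / 2) ^ 2 :=
      Finset.sum_congr rfl fun g _ => by ring
    rw [hswap]
    have hCS : (∑ g : Fin N → Bool, ((f (Fin.cons false g) - f (Fin.cons true g)) / 2)) ^ 2
        ≤ 2 ^ N * ∑ g : Fin N → Bool, ((f (Fin.cons false g) - f (Fin.cons true g)) / 2) ^ 2 :=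
      sq_sum_le _
    have hS : (∑ g : Fin N → Bool, ((f (Fin.cons false g) - f (Fin.cons true g)) / 2))
        = ((∑ g : Fin N → Bool, f (Fin.cons false g))
            - ∑ g : Fin N → Bool, f (Fin.cons true g)) / 2 := by
      rw [← Finset.sum_div, Finset.sum_sub_distrib]
    rw [hS] at hCS
    have hpow : (2:ℝ) ^ (N+1) = 2 * 2 ^ N := by ring
    rw [hpow]
    nlinarith [IH₀, IH₁, hCS]

section Abstract

/-- Poincaré-type consequence of the variance bound: second moment of a function with
bounded discrete derivatives. -/
lemma avg_sq_le (F : (Fin N → Bool) → ℝ) (c : Fin N → ℝ)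
    (hdiff : ∀ (n : Fin N) (ε : Fin N → Bool), |F ε - F (flipv n ε)| ≤ 2 * c n) :
    ∑ ε, F ε ^ 2 ≤ 2 ^ N * (((∑ ε, F ε) / 2 ^ N) ^ 2 + ∑ n, c n ^ 2) := by
  have hvar := var_le N F
  have h2 : (0:ℝ) < 2 ^ N := by positivity
  have hD : ∀ n : Fin N, ∑ ε, ((F ε - F (flipv n ε)) / 2) ^ 2 ≤ 2 ^ N * c n ^ 2 := by
    intro n
    calc ∑ ε, ((F ε - F (flipv n ε)) / 2) ^ 2 ≤ ∑ _ε : Fin N → Bool, c n ^ 2 := by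
          refine Finset.sum_le_sum fun ε _ => ?_
          rw [← sq_abs]
          refine pow_le_pow_left₀ (abs_nonneg _) ?_ 2
          rw [abs_div, abs_of_nonneg (by norm_num : (0:ℝ) ≤ 2),
            div_le_iff₀ (by norm_num : (0:ℝ) < 2)]
          calc |F ε - F (flipv n ε)| ≤ 2 * c n := hdiff n ε
            _ = c n * 2 := by ring
      _ = 2 ^ N * c n ^ 2 := by
          rw [Finset.sum_const, Finset.card_univ, nsmul_eq_mul,
            show ((Fintype.card (Fin N → Bool) : ℝ)) = 2 ^ N from card_cube N]
  have hDsum : ∑ n, ∑ ε, ((F ε - F (flipv n ε)) / 2) ^ 2 ≤ ∑ n, 2 ^ N * c n ^ 2 :=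
    Finset.sum_le_sum fun n _ => hD n
  rw [← mul_le_mul_iff_right₀ h2]
  calc 2 ^ N * ∑ ε, F ε ^ 2
      ≤ (∑ ε, F ε) ^ 2 + 2 ^ N * ∑ n, ∑ ε, ((F ε - F (flipv n ε)) / 2) ^ 2 := by linarith
    _ ≤ (∑ ε, F ε) ^ 2 + 2 ^ N * ∑ n, 2 ^ N * c n ^ 2 := by
        have := mul_le_mul_of_nonneg_left hDsum h2.le
        linarith
    _ = 2 ^ N * (2 ^ N * (((∑ ε, F ε) / 2 ^ N) ^ 2 + ∑ n, c n ^ 2)) := by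
        rw [← Finset.mul_sum]
        field_simp

end Abstract

section Vector

variable {X : Type*} [NormedAddCommGroup X]

lemma norm_sum_diff_le (y : Fin N → X) (n : Fin N) (ε : Fin N → Bool) :
    ‖(∑ m, (if ε m then y m else -y m)) - ∑ m, (if flipv n ε m then y m else -y m)‖
      ≤ 2 * ‖y n‖ := by
  rw [← Finset.sum_sub_distrib]
  rw [Finset.sum_eq_single_of_mem n (mem_univ n) (fun m _ hm => by
    rw [flipv, Function.update_of_ne hm, sub_self])]
  rw [flipv, Function.update_self]
  have h2 : ∀ a : X, ‖a + a‖ ≤ 2 * ‖a‖ := fun a => by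
    rw [two_mul]; exact norm_add_le _ _
  cases hεn : ε n
  · simp only [Bool.not_false, if_true, Bool.false_eq_true, if_false]
    rw [show -y n - y n = -(y n + y n) from by abel, norm_neg]
    exact h2 _
  · simp only [Bool.not_true, if_true, Bool.false_eq_true, if_false]
    rw [sub_neg_eq_add]
    exact h2 _

/-- Second-moment bound for Rademacher sums in a normed group. -/
lemma sum_norm_sq_le (N : ℕ) (y : Fin N → X) :
    ∑ ε : Fin N → Bool, ‖∑ n, (if ε n then y n else -y n)‖ ^ 2
      ≤ 2 ^ N * ((radAvg N y) ^ 2 + ∑ n, ‖y n‖ ^ 2) := by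
  have key := avg_sq_le (fun ε => ‖∑ n, (if ε n then y n else -y n)‖) (fun n => ‖y n‖)
    (fun n ε => by
      calc |‖∑ m, (if ε m then y m else -y m)‖ - ‖∑ m, (if flipv n ε m then y m else -y m)‖|
          ≤ ‖(∑ m, (if ε m then y m else -y m)) - ∑ m, (if flipv n ε m then y m else -y m)‖ :=
            abs_norm_sub_norm_le _ _
        _ ≤ 2 * ‖y n‖ := norm_sum_diff_le y n ε)
  simpa [radAvg] using key

end Vector

section Scalar

/-- Monotonicity of `ℓ^p` norms: for `0 < p ≤ q`, `∑ aᵢ^q ≤ (∑ aᵢ^p)^(q/p)`. -/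
lemma sum_rpow_le {ι : Type*} (s : Finset ι) (a : ι → ℝ) (ha : ∀ i ∈ s, 0 ≤ a i)
    {p q : ℝ} (hp : 0 < p) (hpq : p ≤ q) :
    ∑ i ∈ s, a i ^ q ≤ (∑ i ∈ s, a i ^ p) ^ (q / p) := by
  have hq : 0 < q := lt_of_lt_of_le hp hpq
  have hqp1 : 0 ≤ q / p - 1 := by
    rw [sub_nonneg, le_div_iff₀ hp]
    linarith
  have hA0 : 0 ≤ ∑ i ∈ s, a i ^ p :=
    Finset.sum_nonneg fun i hi => Real.rpow_nonneg (ha i hi) p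
  rcases eq_or_lt_of_le hA0 with h | h
  · -- the sum of `p`-th powers is zero, hence all terms vanish
    have hz : ∀ i ∈ s, a i ^ p = 0 := by
      intro i hi
      have := (Finset.sum_eq_zero_iff_of_nonneg
        (fun j hj => Real.rpow_nonneg (ha j hj) p)).mp h.symm
      exact this i hi
    have hz' : ∀ i ∈ s, a i = 0 := fun i hi =>
      ((Real.rpow_eq_zero_iff_of_nonneg (ha i hi)).mp (hz i hi)).1
    have hL : ∑ i ∈ s, a i ^ q = 0 :=
      Finset.sum_eq_zero fun i hi => by
        rw [hz' i hi, Real.zero_rpow (ne_of_gt hq)]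
    rw [hL, ← h, Real.zero_rpow]
    positivity
  · set A := ∑ i ∈ s, a i ^ p with hA
    calc ∑ i ∈ s, a i ^ q = ∑ i ∈ s, (a i ^ p) ^ (q / p) := by
          refine Finset.sum_congr rfl fun i hi => ?_
          rw [← Real.rpow_mul (ha i hi)]
          congr 1
          field_simp
      _ ≤ ∑ i ∈ s, (a i ^ p) * A ^ (q / p - 1) := by
          refine Finset.sum_le_sum fun i hi => ?_
          rcases eq_or_lt_of_le (Real.rpow_nonneg (ha i hi) p) with h0 | h0
          · rw [← h0, Real.zero_rpow, zero_mul]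
            positivity
          · have hxA : a i ^ p ≤ A :=
              Finset.single_le_sum (fun j hj => Real.rpow_nonneg (ha j hj) p) hi
            calc (a i ^ p) ^ (q / p)
                = (a i ^ p) ^ (1 + (q / p - 1)) := by ring_nf
              _ = (a i ^ p) * (a i ^ p) ^ (q / p - 1) := by
                  rw [Real.rpow_add h0, Real.rpow_one]
              _ ≤ (a i ^ p) * A ^ (q / p - 1) := by
                  exact mul_le_mul_of_nonneg_left
                    (Real.rpow_le_rpow (le_of_lt h0) hxA hqp1) (le_of_lt h0)
      _ = A * A ^ (q / p - 1) := by rw [← Finset.sum_mul]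
      _ = A ^ (q / p) := by
          rw [← Real.rpow_one_add' hA0
            (by rw [show (1 : ℝ) + (q / p - 1) = q / p from by ring]
                exact (div_pos hq hp).ne')]
          congr 1
          ring
  
end Scalar

/-- Nonnegativity of the Rademacher average. -/
lemma radAvg_nonneg {X : Type*} [NormedAddCommGroup X] (N : ℕ) (x : Fin N → X) :
    0 ≤ radAvg N x :=
  div_nonneg (Finset.sum_nonneg fun _ _ => norm_nonneg _) (by positivity)

end LpSumTypeAux

open LpSumTypeAux Finset in
/-- If `X` has type `p` (`1 ≤ p ≤ 2`) with constant `T`, then the ℓ₂-sum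
`ℓ₂(X) = (Σ ⊕ Xᵢ)₂` of countably many copies of `X` has type `p` with a constant
`C = C(T,p)` depending only on `T` and `p`. -/
theorem lp_sum_type (p T : ℝ) (hp : 1 ≤ p) (hp2 : p ≤ 2) (hT : 0 ≤ T) :
    ∃ C : ℝ, ∀ (X : Type) [NormedAddCommGroup X] [NormedSpace ℝ X] [CompleteSpace X],
      HasTypeWith p T X → HasTypeWith p C (lp (fun _ : ℕ => X) 2) := by
  classical
  refine ⟨Real.sqrt (T ^ 2 + 1), ?_⟩
  intro X _ _ _ hX N x
  have hp0 : 0 < p := lt_of_lt_of_le one_pos hp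
  set A : ℝ := ∑ n, ‖x n‖ ^ p with hA
  have hA0 : 0 ≤ A := Finset.sum_nonneg fun n _ => Real.rpow_nonneg (norm_nonneg _) p
  set r : ℝ := 2 / p with hr
  have hr1 : 1 ≤ r := by rw [hr, le_div_iff₀ hp0]; linarith
  have hr0 : 0 < r := lt_of_lt_of_le one_pos hr1
  set S : (Fin N → Bool) → lp (fun _ : ℕ => X) 2 :=
    fun ε => ∑ n, (if ε n then x n else -x n) with hS
  -- coordinates of the sign sums
  have hScoe : ∀ (ε : Fin N → Bool) (i : ℕ),
      (S ε : ∀ _ : ℕ, X) i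
        = ∑ n, (if ε n then (x n : ∀ _ : ℕ, X) i else -((x n : ∀ _ : ℕ, X) i)) := by
    intro ε i
    rw [hS]
    simp only [lp.coeFn_sum, Finset.sum_apply,
      apply_ite (fun v : lp (fun _ : ℕ => X) 2 => (v : ∀ _ : ℕ, X) i), lp.coeFn_neg,
      Pi.neg_apply]
  -- summability of coordinate squares
  have hsq : ∀ f : lp (fun _ : ℕ => X) 2, Summable fun i => ‖(f : ∀ _ : ℕ, X) i‖ ^ 2 := by
    intro f
    have h := (memℓp_gen_iff (p := 2) (by norm_num)).mp (lp.memℓp f)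
    simpa [Real.rpow_two] using h
  have hnormsq : ∀ f : lp (fun _ : ℕ => X) 2, ‖f‖ ^ 2 = ∑' i, ‖(f : ∀ _ : ℕ, X) i‖ ^ 2 := by
    intro f
    have h := lp.norm_rpow_eq_tsum (p := 2) (by norm_num) f
    simpa [Real.rpow_two] using h
  -- the coordinatewise `ℓ^p`-sums
  set B : ℕ → ℝ := fun i => ∑ n, ‖(x n : ∀ _ : ℕ, X) i‖ ^ p with hB
  have hB0 : ∀ i, 0 ≤ B i := fun i =>
    Finset.sum_nonneg fun n _ => Real.rpow_nonneg (norm_nonneg _) p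
  have hBr : ∀ i, (B i ^ (1 / p)) ^ 2 = B i ^ r := by
    intro i
    rw [← Real.rpow_two, ← Real.rpow_mul (hB0 i)]
    congr 1
    rw [hr]; ring
  -- the coordinatewise second-moment bound (type p of X plus the variance bound)
  have hcoord : ∀ i : ℕ, ∑ ε : Fin N → Bool, ‖(S ε : ∀ _ : ℕ, X) i‖ ^ 2
      ≤ 2 ^ N * ((T ^ 2 + 1) * B i ^ r) := by
    intro i
    have h1 : ∑ ε : Fin N → Bool, ‖(S ε : ∀ _ : ℕ, X) i‖ ^ 2
        = ∑ ε : Fin N → Bool,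
            ‖∑ n, (if ε n then (x n : ∀ _ : ℕ, X) i else -((x n : ∀ _ : ℕ, X) i))‖ ^ 2 :=
      Finset.sum_congr rfl fun ε _ => by rw [hScoe]
    rw [h1]
    have h2 := sum_norm_sq_le (X := X) N (fun n => (x n : ∀ _ : ℕ, X) i)
    refine le_trans h2 ?_
    have h0 : 0 ≤ radAvg N (fun n => (x n : ∀ _ : ℕ, X) i) := radAvg_nonneg N _
    have h3 : radAvg N (fun n => (x n : ∀ _ : ℕ, X) i) ≤ T * B i ^ (1 / p) := hX N _
    have h4 : radAvg N (fun n => (x n : ∀ _ : ℕ, X) i) ^ 2 ≤ T ^ 2 * B i ^ r := by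
      have h4' := pow_le_pow_left₀ h0 h3 2
      rw [mul_pow, hBr i] at h4'
      exact h4'
    have h5 : ∑ n, ‖(x n : ∀ _ : ℕ, X) i‖ ^ 2 ≤ B i ^ r := by
      have h5' := sum_rpow_le univ (fun n => ‖(x n : ∀ _ : ℕ, X) i‖)
        (fun n _ => norm_nonneg _) hp0 hp2
      calc ∑ n, ‖(x n : ∀ _ : ℕ, X) i‖ ^ 2
          = ∑ n, ‖(x n : ∀ _ : ℕ, X) i‖ ^ (2 : ℝ) :=
            Finset.sum_congr rfl fun n _ => (Real.rpow_two _).symm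
        _ ≤ (∑ n, ‖(x n : ∀ _ : ℕ, X) i‖ ^ p) ^ (2 / p) := h5'
        _ = B i ^ r := by rw [hB, hr]
    have hmain : radAvg N (fun n => (x n : ∀ _ : ℕ, X) i) ^ 2
        + ∑ n, ‖(x n : ∀ _ : ℕ, X) i‖ ^ 2 ≤ (T ^ 2 + 1) * B i ^ r := by linarith
    exact mul_le_mul_of_nonneg_left hmain (by positivity)
  -- the Minkowski step in `ℓ^{2/p}`
  set q2 : ENNReal := ENNReal.ofReal r with hq2
  haveI hfact : Fact (1 ≤ q2) := ⟨by rw [hq2]; exact ENNReal.one_le_ofReal.mpr hr1⟩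
  have hq2t : q2.toReal = r := by rw [hq2]; exact ENNReal.toReal_ofReal hr0.le
  have hptr : ∀ a : ℝ, 0 ≤ a → (a ^ p) ^ r = a ^ 2 := by
    intro a ha
    rw [← Real.rpow_mul ha, show p * r = 2 from by rw [hr]; field_simp, Real.rpow_two]
  have hmem : ∀ n : Fin N, Memℓp (fun i => ‖(x n : ∀ _ : ℕ, X) i‖ ^ p) q2 := by
    intro n
    apply memℓp_gen
    rw [hq2t]
    refine (hsq (x n)).congr fun i => ?_
    rw [Real.norm_of_nonneg (Real.rpow_nonneg (norm_nonneg _) p),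
      hptr _ (norm_nonneg _)]
  set g : Fin N → lp (fun _ : ℕ => ℝ) q2 :=
    fun n => ⟨fun i => ‖(x n : ∀ _ : ℕ, X) i‖ ^ p, hmem n⟩ with hg
  have hgnorm : ∀ n, ‖g n‖ = ‖x n‖ ^ p := by
    intro n
    rw [lp.norm_eq_tsum_rpow (by rw [hq2t]; exact hr0) (g n), hq2t]
    have hterm : ∀ i : ℕ, ‖(g n : ∀ _ : ℕ, ℝ) i‖ ^ r = ‖(x n : ∀ _ : ℕ, X) i‖ ^ 2 := by
      intro i
      show ‖‖(x n : ∀ _ : ℕ, X) i‖ ^ p‖ ^ r = _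
      rw [Real.norm_of_nonneg (Real.rpow_nonneg (norm_nonneg _) p),
        hptr _ (norm_nonneg _)]
    rw [tsum_congr hterm, ← hnormsq (x n), ← Real.rpow_two, ← Real.rpow_mul (norm_nonneg _),
      show (2 : ℝ) * (1 / r) = p from by rw [hr]; field_simp]
  set G : lp (fun _ : ℕ => ℝ) q2 := ∑ n, g n with hG
  have hGnorm : ‖G‖ ≤ A := by
    calc ‖G‖ ≤ ∑ n, ‖g n‖ := norm_sum_le _ _
      _ = A := Finset.sum_congr rfl fun n _ => hgnorm n
  have hGcoe : ∀ i, (G : ∀ _ : ℕ, ℝ) i = B i := by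
    intro i
    rw [hG]
    simp only [lp.coeFn_sum, Finset.sum_apply]
    rfl
  have hGsum : Summable fun i => B i ^ r := by
    have h := (memℓp_gen_iff (p := q2) (by rw [hq2t]; exact hr0)).mp (lp.memℓp G)
    rw [hq2t] at h
    refine h.congr fun i => ?_
    rw [Real.norm_of_nonneg (by rw [hGcoe]; exact hB0 i), hGcoe]
  have htsum : ∑' i, B i ^ r ≤ A ^ r := by
    have h1 : ‖G‖ ^ r = ∑' i, B i ^ r := by
      have h2 := lp.norm_rpow_eq_tsum (by rw [hq2t]; exact hr0) G
      rw [hq2t] at h2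
      rw [h2]
      refine tsum_congr fun i => ?_
      rw [Real.norm_of_nonneg (by rw [hGcoe]; exact hB0 i), hGcoe]
    rw [← h1]
    exact Real.rpow_le_rpow (norm_nonneg _) hGnorm hr0.le
  -- combine everything
  have hsum_swap : ∑ ε : Fin N → Bool, ‖S ε‖ ^ 2
      = ∑' i, ∑ ε : Fin N → Bool, ‖(S ε : ∀ _ : ℕ, X) i‖ ^ 2 := by
    calc ∑ ε : Fin N → Bool, ‖S ε‖ ^ 2
        = ∑ ε : Fin N → Bool, ∑' i, ‖(S ε : ∀ _ : ℕ, X) i‖ ^ 2 :=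
          Finset.sum_congr rfl fun ε _ => hnormsq (S ε)
      _ = ∑' i, ∑ ε : Fin N → Bool, ‖(S ε : ∀ _ : ℕ, X) i‖ ^ 2 :=
          (Summable.tsum_finsetSum fun ε _ => hsq (S ε)).symm
  have htotal : ∑ ε : Fin N → Bool, ‖S ε‖ ^ 2 ≤ 2 ^ N * ((T ^ 2 + 1) * A ^ r) := by
    rw [hsum_swap]
    have hsumR : Summable fun i => 2 ^ N * ((T ^ 2 + 1) * B i ^ r) :=
      ((hGsum.mul_left (T ^ 2 + 1)).mul_left (2 ^ N))
    have hsumL : Summable fun i => ∑ ε : Fin N → Bool, ‖(S ε : ∀ _ : ℕ, X) i‖ ^ 2 :=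
      summable_sum fun ε _ => hsq (S ε)
    calc ∑' i, ∑ ε : Fin N → Bool, ‖(S ε : ∀ _ : ℕ, X) i‖ ^ 2
        ≤ ∑' i, 2 ^ N * ((T ^ 2 + 1) * B i ^ r) := Summable.tsum_le_tsum hcoord hsumL hsumR
      _ = 2 ^ N * ((T ^ 2 + 1) * ∑' i, B i ^ r) := by
          rw [tsum_mul_left, tsum_mul_left]
      _ ≤ 2 ^ N * ((T ^ 2 + 1) * A ^ r) := by
          have := mul_le_mul_of_nonneg_left htsum (by positivity : (0:ℝ) ≤ T ^ 2 + 1)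
          have h2N : (0:ℝ) ≤ 2 ^ N := by positivity
          exact mul_le_mul_of_nonneg_left this h2N
  -- Cauchy–Schwarz and conclusion
  have hravg : radAvg N x = (∑ ε : Fin N → Bool, ‖S ε‖) / 2 ^ N := rfl
  have hra0 : 0 ≤ radAvg N x := radAvg_nonneg N x
  have hsq' : radAvg N x ^ 2 ≤ (T ^ 2 + 1) * A ^ r := by
    rw [hravg, div_pow, div_le_iff₀ (by positivity)]
    calc (∑ ε : Fin N → Bool, ‖S ε‖) ^ 2
        ≤ 2 ^ N * ∑ ε : Fin N → Bool, ‖S ε‖ ^ 2 := sq_sum_le _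
      _ ≤ 2 ^ N * (2 ^ N * ((T ^ 2 + 1) * A ^ r)) :=
          mul_le_mul_of_nonneg_left htotal (by positivity)
      _ = (T ^ 2 + 1) * A ^ r * (2 ^ N) ^ 2 := by ring
  calc radAvg N x ≤ Real.sqrt ((T ^ 2 + 1) * A ^ r) := by
        rw [← Real.sqrt_sq hra0]
        exact Real.sqrt_le_sqrt hsq'
    _ = Real.sqrt (T ^ 2 + 1) * Real.sqrt (A ^ r) := Real.sqrt_mul (by positivity) _
    _ = Real.sqrt (T ^ 2 + 1) * A ^ (1 / p) := by
        congr 1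
        have hAr : A ^ r = (A ^ (1 / p)) ^ 2 := by
          rw [← Real.rpow_two, ← Real.rpow_mul hA0]
          congr 1
          rw [hr]; ring
        rw [hAr, Real.sqrt_sq (Real.rpow_nonneg hA0 _)]
end

section
/- Let E be a Banach space and assume: for every separable Banach space Z finitely representable in E, every increasing chain Z₁ ⊆ Z₂ ⊆ ⋯ of finite-dimensional subspaces with dense union in Z, every ε ∈ (0,1), and every (1+ε^n)-isomorphic embedding iₙ : Zₙ → E that can always be extended to a (1+ε^{n+1})-isomorphic embedding i_{n+1} : Z_{n+1} → E with i_{n+1}|_{Zₙ} = iₙ. Then for every δ > 2ε there exists an isomorphic embedding u : Z → E with ‖u‖·‖u⁻¹‖ ≤ 1 + δ. -/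
/-!
Since the distortions `1 + εⁿ` tend to `1`, the compatible embeddings `iₙ` glue to a linear map
`j` on `⋃ Zₙ` that multiplies all norms by one constant `α`: for `x, y` in a common `Zₙ` the
`(1 + εⁿ)`-bounds give `‖j x‖ ‖y‖ ≤ (1 + εⁿ) ‖j y‖ ‖x‖`, and `n → ∞` turns this into equality of
ratios. Such a map extends by continuity from the dense subspace `⋃ Zₙ` to all of `Z`, and a
map with `‖u z‖ = α ‖z‖` is a `(1 + δ)`-embedding for every `δ ≥ 0`.
-/

/-- `f` is a `c`-isomorphic embedding (i.e. `‖f‖·‖f⁻¹‖ ≤ c` up to scaling):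
for some `a > 0`, `a‖x‖ ≤ ‖f x‖ ≤ a·c·‖x‖` for all `x`. -/
def IsEmbeddingWith {Z E : Type*} [NormedAddCommGroup Z] [NormedSpace ℝ Z]
    [NormedAddCommGroup E] [NormedSpace ℝ E] (c : ℝ) (f : Z →ₗ[ℝ] E) : Prop :=
  ∃ a : ℝ, 0 < a ∧ ∀ x : Z, a * ‖x‖ ≤ ‖f x‖ ∧ ‖f x‖ ≤ a * c * ‖x‖

/-- `X` is `l`-finitely representable in `Y`. -/
def LambdaFinRep (l : ℝ) (X Y : Type*)
    [NormedAddCommGroup X] [NormedSpace ℝ X]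
    [NormedAddCommGroup Y] [NormedSpace ℝ Y] : Prop :=
  ∀ A : Submodule ℝ X, FiniteDimensional ℝ A →
    ∃ (B : Submodule ℝ Y) (u : A ≃L[ℝ] B),
      ‖(u : A →L[ℝ] B)‖ * ‖(u.symm : B →L[ℝ] A)‖ < l

/-- `X` is finitely representable in `Y` (`X <_f Y`). -/
def FinRep (X Y : Type*)
    [NormedAddCommGroup X] [NormedSpace ℝ X]
    [NormedAddCommGroup Y] [NormedSpace ℝ Y] : Prop :=
  ∀ l : ℝ, 1 < l → LambdaFinRep l X Y

open Filter Topology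

section Embedding

variable {V F : Type*} [NormedAddCommGroup V] [NormedSpace ℝ V]
  [NormedAddCommGroup F] [NormedSpace ℝ F] {c : ℝ} {f : V →ₗ[ℝ] F}

theorem IsEmbeddingWith.injective (hf : IsEmbeddingWith c f) : Function.Injective f := by
  obtain ⟨a, ha, hbound⟩ := hf
  refine (injective_iff_map_eq_zero f).2 fun x hx => norm_le_zero_iff.1 ?_
  have := (hbound x).1
  rw [hx, norm_zero] at this
  exact nonpos_of_mul_nonpos_right this ha

theorem IsEmbeddingWith.norm_apply_mul_norm_le (hf : IsEmbeddingWith c f) (x y : V) :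
    ‖f x‖ * ‖y‖ ≤ c * (‖f y‖ * ‖x‖) := by
  obtain ⟨a, ha, hbound⟩ := hf
  obtain ⟨hx₁, hx₂⟩ := hbound x
  obtain ⟨hy₁, hy₂⟩ := hbound y
  nlinarith [norm_nonneg x, norm_nonneg y, norm_nonneg (f x), norm_nonneg (f y),
    mul_le_mul_of_nonneg_right hx₂ (norm_nonneg y)]

theorem isEmbeddingWith_of_norm_apply_eq {α : ℝ} (hα : 0 < α) (hc : 1 ≤ c)
    (hf : ∀ x, ‖f x‖ = α * ‖x‖) : IsEmbeddingWith c f := by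
  refine ⟨α, hα, fun x => ⟨(hf x).ge, ?_⟩⟩
  rw [hf x, mul_assoc]
  exact mul_le_mul_of_nonneg_left (le_mul_of_one_le_left (norm_nonneg x) hc) hα.le

end Embedding

namespace LinearMap

variable {𝕜 V F : Type*} [NontriviallyNormedField 𝕜] [NormedAddCommGroup V] [NormedSpace 𝕜 V]
  [NormedAddCommGroup F] [NormedSpace 𝕜 F]

theorem exists_norm_apply_eq_mul_norm (f : V →ₗ[𝕜] F) (hf : Function.Injective f)
    (hratio : ∀ x y, ‖f x‖ * ‖y‖ ≤ ‖f y‖ * ‖x‖) :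
    ∃ α : ℝ, 0 < α ∧ ∀ x, ‖f x‖ = α * ‖x‖ := by
  rcases subsingleton_or_nontrivial V with hV | hV
  · exact ⟨1, one_pos, fun x => by simp [Subsingleton.elim x 0]⟩
  obtain ⟨x₀, hx₀⟩ := exists_ne (0 : V)
  have hx₀_pos : 0 < ‖x₀‖ := norm_pos_iff.2 hx₀
  have hfx₀_pos : 0 < ‖f x₀‖ := norm_pos_iff.2 ((map_ne_zero_iff f hf).2 hx₀)
  refine ⟨‖f x₀‖ / ‖x₀‖, div_pos hfx₀_pos hx₀_pos, fun x => ?_⟩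
  rw [div_mul_eq_mul_div, eq_div_iff hx₀_pos.ne']
  exact le_antisymm (hratio x x₀) (hratio x₀ x)

theorem exists_extend_norm_apply_eq [CompleteSpace F] {D : Submodule 𝕜 V}
    (hD : Dense (D : Set V)) (f : D →ₗ[𝕜] F) {α : ℝ} (hf : ∀ x, ‖f x‖ = α * ‖x‖) :
    ∃ u : V →L[𝕜] F, ∀ z, ‖u z‖ = α * ‖z‖ := by
  have hdense : DenseRange D.subtype := by
    rwa [DenseRange, Submodule.coe_subtype, Subtype.range_coe]
  have hbound : ∃ C, ∀ x, ‖f x‖ ≤ C * ‖D.subtype x‖ := ⟨α, fun x => (hf x).le⟩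
  refine ⟨f.extendOfNorm D.subtype, fun z => hdense.induction ?_ ?_ z⟩
  · rintro _ ⟨x, rfl⟩
    rw [extendOfNorm_eq hdense hbound, hf, Submodule.subtype_apply, Submodule.coe_norm]
  · exact isClosed_eq (by fun_prop) (by fun_prop)

end LinearMap

namespace LinearPMap

theorem eventually_sSup_range_apply_eq {R V F : Type*} [Ring R] [AddCommGroup V] [Module R V]
    [AddCommGroup F] [Module R F] {p : ℕ → V →ₗ.[R] F} (hp : Monotone p)
    (x : (LinearPMap.sSup (Set.range p) hp.directed_le.directedOn_range).domain) :
    ∀ᶠ n in atTop, ∃ hx : (x : V) ∈ (p n).domain,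
      LinearPMap.sSup (Set.range p) hp.directed_le.directedOn_range x = p n ⟨x, hx⟩ := by
  obtain ⟨_, ⟨n, rfl⟩, hxn⟩ :=
    (mem_domain_sSup_iff (Set.range_nonempty p) hp.directed_le.directedOn_range).1 x.2
  filter_upwards [eventually_ge_atTop n] with m hm
  have hxm := (hp hm).1 hxn
  exact ⟨hxm, LinearPMap.sSup_apply _ (Set.mem_range_self m) ⟨x.1, hxm⟩⟩

theorem exists_norm_sSup_range_apply_eq_mul_norm {V F : Type*} [NormedAddCommGroup V]
    [NormedSpace ℝ V] [NormedAddCommGroup F] [NormedSpace ℝ F] {p : ℕ → V →ₗ.[ℝ] F}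
    (hp : Monotone p) {c : ℕ → ℝ} (hc : Tendsto c atTop (𝓝 1))
    (hemb : ∀ n, IsEmbeddingWith (c n) (p n).toFun) :
    ∃ α : ℝ, 0 < α ∧ ∀ x,
      ‖LinearPMap.sSup (Set.range p) hp.directed_le.directedOn_range x‖ = α * ‖x‖ := by
  set g := LinearPMap.sSup (Set.range p) hp.directed_le.directedOn_range
  refine g.toFun.exists_norm_apply_eq_mul_norm ?_ fun x y => ?_
  · refine (injective_iff_map_eq_zero _).2 fun x hx => ?_
    obtain ⟨n, hxn, hgx⟩ := (eventually_sSup_range_apply_eq hp x).exists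
    rw [toFun_eq_coe, hgx] at hx
    simpa using congrArg Subtype.val ((injective_iff_map_eq_zero _).1 (hemb n).injective _ hx)
  · have hlim : Tendsto (fun n => c n * (‖g y‖ * ‖x‖)) atTop (𝓝 (‖g y‖ * ‖x‖)) := by
      simpa using hc.mul_const (‖g y‖ * ‖x‖)
    refine ge_of_tendsto hlim ?_
    filter_upwards [eventually_sSup_range_apply_eq hp x, eventually_sSup_range_apply_eq hp y]
      with n ⟨hx, hgx⟩ ⟨hy, hgy⟩
    rw [toFun_eq_coe, hgx, hgy]
    exact (hemb n).norm_apply_mul_norm_le ⟨x, hx⟩ ⟨y, hy⟩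

end LinearPMap

theorem shuttle_limit_embedding_general {Z E : Type*}
    [NormedAddCommGroup Z] [NormedSpace ℝ Z]
    [NormedAddCommGroup E] [NormedSpace ℝ E] [CompleteSpace E]
    (Zn : ℕ → Submodule ℝ Z) (hmono : Monotone Zn)
    (hdense : Dense ((⨆ n, Zn n : Submodule ℝ Z) : Set Z))
    (ε : ℝ) (hε0 : 0 < ε) (hε1 : ε < 1)
    (i : ∀ n, (Zn n) →ₗ[ℝ] E)
    (hemb : ∀ n, IsEmbeddingWith (1 + ε ^ n) (i n))
    (hcompat : ∀ (n : ℕ) (x : Zn n),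
      i (n + 1) (Submodule.inclusion (hmono (Nat.le_succ n)) x) = i n x)
    (δ : ℝ) (hδ : 2 * ε < δ) :
    ∃ u : Z →ₗ[ℝ] E, IsEmbeddingWith (1 + δ) u := by
  let p : ℕ → Z →ₗ.[ℝ] E := fun n => ⟨Zn n, i n⟩
  have hp : Monotone p := monotone_nat_of_le_succ fun n =>
    ⟨hmono n.le_succ, fun x y hxy =>
      (hcompat n x).symm.trans (congrArg (i (n + 1)) (Subtype.ext hxy))⟩
  have hc : Tendsto (fun n => 1 + ε ^ n) atTop (𝓝 1) := by
    simpa using (tendsto_pow_atTop_nhds_zero_of_lt_one hε0.le hε1).const_add 1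
  obtain ⟨α, hα, hnorm⟩ := LinearPMap.exists_norm_sSup_range_apply_eq_mul_norm hp hc hemb
  set g := LinearPMap.sSup (Set.range p) hp.directed_le.directedOn_range
  have hdomain : Dense (g.domain : Set Z) :=
    hdense.mono <| SetLike.coe_mono <|
      iSup_le fun n => (LinearPMap.le_sSup _ (Set.mem_range_self n)).1
  obtain ⟨u, hu⟩ := LinearMap.exists_extend_norm_apply_eq hdomain _ hnorm
  exact ⟨u, isEmbeddingWith_of_norm_apply_eq hα (by linarith) hu⟩

/-- The one-sided shuttle (back-and-forth) limit argument: let `Z` be a separable Banach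
space finitely representable in `E`, `Z₁ ⊆ Z₂ ⊆ ⋯` an increasing chain of
finite-dimensional subspaces with dense union, `ε ∈ (0,1)`, and `iₙ : Zₙ → E` a compatible
chain of `(1+εⁿ)`-isomorphic embeddings (each `i_{n+1}` extending `iₙ`).  Then for every
`δ > 2ε` there is an isomorphic embedding `u : Z → E` with `‖u‖·‖u⁻¹‖ ≤ 1 + δ`. -/
theorem shuttle_limit_embedding {Z E : Type*}
    [NormedAddCommGroup Z] [NormedSpace ℝ Z] [CompleteSpace Z]
    [TopologicalSpace.SeparableSpace Z]
    [NormedAddCommGroup E] [NormedSpace ℝ E] [CompleteSpace E]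
    (hZE : FinRep Z E)
    (Zn : ℕ → Submodule ℝ Z) (hmono : Monotone Zn)
    (hfd : ∀ n, FiniteDimensional ℝ (Zn n))
    (hdense : Dense ((⨆ n, Zn n : Submodule ℝ Z) : Set Z))
    (ε : ℝ) (hε0 : 0 < ε) (hε1 : ε < 1)
    (i : ∀ n, (Zn n) →ₗ[ℝ] E)
    (hemb : ∀ n, IsEmbeddingWith (1 + ε ^ n) (i n))
    (hcompat : ∀ (n : ℕ) (x : Zn n),
      i (n + 1) (Submodule.inclusion (hmono (Nat.le_succ n)) x) = i n x)
    (δ : ℝ) (hδ : 2 * ε < δ) :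
    ∃ u : Z →ₗ[ℝ] E, IsEmbeddingWith (1 + δ) u :=
  shuttle_limit_embedding_general Zn hmono hdense ε hε0 hε1 i hemb hcompat δ hδ
end
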